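/- Let E be a closed non-empty set in ℝⁿ with |E| = 0, and Q₀ a cube intersecting E. For every t ∈ (0,1), the set 𝓢(t,Q₀,E) = {L ≥ 0 : Σ_{Q ∈ D_E(Q₀), l(Q) ≤ L} |Q| ≥ t|Q₀|} is a half-closed interval [L'_t, ∞) with 0 < L'_t ≤ l(𝓜(Q₀)); in particular its infimum is attained and equals 2^{-k₀} l(𝓜(Q₀)) for some integer k₀ ≥ 0. -/

import Mathlib

open MeasureTheory Set
open scoped Classical

/-- A half-open axis-parallel cube in `ℝⁿ`. -/
structure Cube (n : ℕ) where
  a : Fin n → ℝ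
  l : ℝ
  l_pos : 0 < l

namespace Cube

/-- The set of points of the cube. -/
def carrier {n : ℕ} (Q : Cube n) : Set (Fin n → ℝ) :=
  {x | ∀ i, Q.a i ≤ x i ∧ x i < Q.a i + Q.l}

/-- The volume (Lebesgue measure) of the cube. -/
def vol {n : ℕ} (Q : Cube n) : ℝ := Q.l ^ n

end Cube

/-- `Q` is a dyadic subcube of `Q₀` of generation `j`. -/
def IsDyadic {n : ℕ} (Q₀ Q : Cube n) (j : ℕ) : Prop :=
  Q.l = Q₀.l / 2 ^ j ∧
    ∃ k : Fin n → ℕ, (∀ i, k i < 2 ^ j) ∧ ∀ i, Q.a i = Q₀.a i + (k i : ℝ) * Q₀.l / 2 ^ j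

/-- The dyadic system of subcubes of `Q₀`. -/
def dyadicFamily {n : ℕ} (Q₀ : Cube n) : Set (Cube n) := {Q | ∃ j, IsDyadic Q₀ Q j}

/-- `P` is the dyadic parent of `Q` inside the dyadic system of `Q₀`. -/
def IsParent {n : ℕ} (Q₀ P Q : Cube n) : Prop :=
  ∃ j : ℕ, IsDyadic Q₀ Q (j + 1) ∧ IsDyadic Q₀ P j ∧ Q.carrier ⊆ P.carrier

/-- The family `D_E(Q₀)` of maximal dyadic subcubes of `Q₀` avoiding `E` whose dyadic
parent meets `E`. -/
def DE {n : ℕ} (E : Set (Fin n → ℝ)) (Q₀ : Cube n) : Set (Cube n) :=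
  {Q | Q ∈ dyadicFamily Q₀ ∧ Q.carrier ∩ E = ∅ ∧
    ∀ P : Cube n, IsParent Q₀ P Q → (P.carrier ∩ E).Nonempty}

/-- `Σ_{Q ∈ D_E(Q₀), l(Q) ≥ L} |Q|`. -/
noncomputable def sumGE {n : ℕ} (E : Set (Fin n → ℝ)) (Q₀ : Cube n) (L : ℝ) : ℝ :=
  ∑' Q : {Q : Cube n // Q ∈ DE E Q₀ ∧ L ≤ Q.l}, (Q : Cube n).vol

/-- `Σ_{Q ∈ D_E(Q₀), l(Q) ≤ L} |Q|`. -/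
noncomputable def sumLE {n : ℕ} (E : Set (Fin n → ℝ)) (Q₀ : Cube n) (L : ℝ) : ℝ :=
  ∑' Q : {Q : Cube n // Q ∈ DE E Q₀ ∧ Q.l ≤ L}, (Q : Cube n).vol

/-- `Σ_{Q ∈ D_E(Q₀), l(Q) < L} |Q|`. -/
noncomputable def sumLT {n : ℕ} (E : Set (Fin n → ℝ)) (Q₀ : Cube n) (L : ℝ) : ℝ :=
  ∑' Q : {Q : Cube n // Q ∈ DE E Q₀ ∧ Q.l < L}, (Q : Cube n).vol

/-- `Σ_{Q ∈ D_E(Q₀), l(Q) > L} |Q|`. -/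
noncomputable def sumGT {n : ℕ} (E : Set (Fin n → ℝ)) (Q₀ : Cube n) (L : ℝ) : ℝ :=
  ∑' Q : {Q : Cube n // Q ∈ DE E Q₀ ∧ L < Q.l}, (Q : Cube n).vol

/-- The set `𝓛(t,Q₀,E)`. -/
def Lset {n : ℕ} (t : ℝ) (Q₀ : Cube n) (E : Set (Fin n → ℝ)) : Set ℝ :=
  {L | 0 ≤ L ∧ t * Q₀.vol ≤ sumGE E Q₀ L}

/-- The set `𝓢(t,Q₀,E)`. -/
def Sset {n : ℕ} (t : ℝ) (Q₀ : Cube n) (E : Set (Fin n → ℝ)) : Set ℝ :=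
  {L | 0 ≤ L ∧ t * Q₀.vol ≤ sumLE E Q₀ L}

/-- `𝓛_{Q₀}(t) = sup 𝓛(t,Q₀,E)` (the max, when attained). -/
noncomputable def Lfun {n : ℕ} (E : Set (Fin n → ℝ)) (Q₀ : Cube n) (t : ℝ) : ℝ :=
  sSup (Lset t Q₀ E)

/-- `𝓢_{Q₀}(t) = inf 𝓢(t,Q₀,E)` (the min, when attained). -/
noncomputable def Sfun {n : ℕ} (E : Set (Fin n → ℝ)) (Q₀ : Cube n) (t : ℝ) : ℝ :=
  sInf (Sset t Q₀ E)

/-- The Muckenhoupt class `A_p` (for `p = 1` the `A₁` condition, for `p > 1` the usual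
`A_p` condition), with cubes as the testing family. -/
def IsAp {n : ℕ} (p : ℝ) (w : (Fin n → ℝ) → ℝ) : Prop :=
  (∀ᵐ x, 0 < w x) ∧ LocallyIntegrable w volume ∧
    ∃ C : ℝ, 0 < C ∧ ∀ Q : Cube n,
      if p = 1 then
        (∫ x in Q.carrier, w x) / Q.vol ≤ C * essInf w (volume.restrict Q.carrier)
      else
        ((∫ x in Q.carrier, w x) / Q.vol) *
          ((∫ x in Q.carrier, w x ^ (-1 / (p - 1))) / Q.vol) ^ (p - 1) ≤ C

/-!
The cubes of `D_E(Q₀)` are pairwise disjoint and cover `Q₀ \ E`, so, `E` being null, their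
volumes add up to `|Q₀|`. Hence `L ↦ Σ_{Q ∈ D_E(Q₀), l(Q) ≤ L} |Q|` is nondecreasing, equals
`|Q₀| ≥ t|Q₀|` at `L = l(𝓜(Q₀))` and drops below `t|Q₀|` for small `L`, being the tail of a
convergent series. Every side length in `D_E(Q₀)` is `l(Q₀) 2^{-j}`, so the function is constant
on each interval `[l(𝓜(Q₀)) 2^{-k-1}, l(𝓜(Q₀)) 2^{-k})`, and the threshold is crossed exactly at
one of the points `l(𝓜(Q₀)) 2^{-k}`.
-/

open scoped ENNReal

theorem exists_div_two_pow_lt (c : ℝ) {ε : ℝ} (hε : 0 < ε) : ∃ k : ℕ, c / 2 ^ k < ε := by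
  obtain ⟨k, hk⟩ := pow_unbounded_of_one_lt (c / ε) one_lt_two
  refine ⟨k, ?_⟩
  rw [div_lt_iff₀ (by positivity)]
  rwa [div_lt_iff₀ hε, mul_comm] at hk

theorem ENNReal.exists_pos_tsum_small_lt {ι : Type*} {f : ι → ℝ≥0∞} (hf : ∑' i, f i ≠ ∞)
    {s : ι → ℝ} (hs : ∀ i, 0 < s i) {τ : ℝ≥0∞} (hτ : 0 < τ) :
    ∃ ε > 0, ∑' i : {i // s i < ε}, f i < τ := by
  obtain ⟨F, hF⟩ := ((ENNReal.tendsto_tsum_compl_atTop_zero hf).eventually_lt_const hτ).exists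
  obtain ⟨ε, hε, hεF⟩ := ((eventually_mem_nhdsWithin (s := Ioi (0 : ℝ)) (a := 0)).and
    (F.eventually_all.2 fun i _ =>
      (eventually_lt_nhds (hs i)).filter_mono nhdsWithin_le_nhds)).exists
  refine ⟨ε, hε, lt_of_le_of_lt ?_ hF⟩
  exact ENNReal.tsum_mono_subtype f fun i hi hiF => lt_asymm hi (hεF i hiF)

namespace Cube

variable {n : ℕ}

theorem ext {Q Q' : Cube n} (ha : Q.a = Q'.a) (hl : Q.l = Q'.l) : Q = Q' := by
  cases Q; cases Q'; simp_all

theorem carrier_eq_pi (Q : Cube n) : Q.carrier = univ.pi fun i => Ico (Q.a i) (Q.a i + Q.l) := by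
  ext x; simp [carrier]

theorem measurableSet_carrier (Q : Cube n) : MeasurableSet Q.carrier := by
  rw [carrier_eq_pi]; exact .univ_pi fun _ => measurableSet_Ico

theorem volume_carrier (Q : Cube n) : volume Q.carrier = ENNReal.ofReal Q.vol := by
  rw [carrier_eq_pi, volume_pi_pi]
  simp [vol, ENNReal.ofReal_pow Q.l_pos.le]

theorem dist_lt_l {Q : Cube n} {x y : Fin n → ℝ} (hx : x ∈ Q.carrier) (hy : y ∈ Q.carrier) :
    dist x y < Q.l := by
  rw [dist_pi_lt_iff Q.l_pos]
  intro i
  obtain ⟨hx₁, hx₂⟩ := hx i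
  obtain ⟨hy₁, hy₂⟩ := hy i
  rw [Real.dist_eq, abs_sub_lt_iff]
  constructor <;> linarith

end Cube

section Dyadic

variable {n : ℕ} {Q₀ Q Q' : Cube n} {j j' : ℕ} {x : Fin n → ℝ}

noncomputable def dyadicCube (Q₀ : Cube n) (j : ℕ) (k : Fin n → ℕ) : Cube n :=
  ⟨fun i => Q₀.a i + (k i : ℝ) * Q₀.l / 2 ^ j, Q₀.l / 2 ^ j, by have := Q₀.l_pos; positivity⟩

noncomputable def dyadicIndex (Q₀ : Cube n) (j : ℕ) (x : Fin n → ℝ) : Fin n → ℕ :=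
  fun i => ⌊(x i - Q₀.a i) / (Q₀.l / 2 ^ j)⌋₊

theorem isDyadic_iff :
    IsDyadic Q₀ Q j ↔ ∃ k : Fin n → ℕ, (∀ i, k i < 2 ^ j) ∧ Q = dyadicCube Q₀ j k := by
  constructor
  · rintro ⟨hl, k, hk, ha⟩
    exact ⟨k, hk, Cube.ext (funext ha) hl⟩
  · rintro ⟨k, hk, rfl⟩
    exact ⟨rfl, k, hk, fun _ => rfl⟩

theorem dyadicCube_zero (Q₀ : Cube n) : dyadicCube Q₀ 0 0 = Q₀ :=
  Cube.ext (by simp [dyadicCube]) (by simp [dyadicCube])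

theorem mem_dyadicCube_iff {k : Fin n → ℕ} :
    x ∈ (dyadicCube Q₀ j k).carrier ↔ (∀ i, Q₀.a i ≤ x i) ∧ dyadicIndex Q₀ j x = k := by
  simp only [Cube.carrier, dyadicCube, funext_iff, dyadicIndex, ← forall_and]
  refine forall_congr' fun i => ?_
  have hu : 0 < Q₀.l / 2 ^ j := by have := Q₀.l_pos; positivity
  rw [mul_div_assoc]
  constructor
  · rintro ⟨h₁, h₂⟩
    have ha : Q₀.a i ≤ x i := le_trans (le_add_of_nonneg_right (by positivity)) h₁
    refine ⟨ha, (Nat.floor_eq_iff (div_nonneg (sub_nonneg.2 ha) hu.le)).2 ⟨?_, ?_⟩⟩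
    · rw [le_div_iff₀ hu]; linarith
    · rw [div_lt_iff₀ hu]; linarith
  · rintro ⟨ha, hk⟩
    rw [← hk]
    have hy : 0 ≤ (x i - Q₀.a i) / (Q₀.l / 2 ^ j) := div_nonneg (sub_nonneg.2 ha) hu.le
    have h₁ := (le_div_iff₀ hu).1 (Nat.floor_le hy)
    have h₂ := (div_lt_iff₀ hu).1 (Nat.lt_floor_add_one ((x i - Q₀.a i) / (Q₀.l / 2 ^ j)))
    constructor <;> linarith

theorem mem_dyadicCube_dyadicIndex (hx : x ∈ Q₀.carrier) (j : ℕ) :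
    x ∈ (dyadicCube Q₀ j (dyadicIndex Q₀ j x)).carrier :=
  mem_dyadicCube_iff.2 ⟨fun i => (hx i).1, rfl⟩

theorem dyadicIndex_lt (hx : x ∈ Q₀.carrier) (j : ℕ) (i : Fin n) :
    dyadicIndex Q₀ j x i < 2 ^ j := by
  obtain ⟨hx₁, hx₂⟩ := hx i
  have hu : 0 < Q₀.l / 2 ^ j := by have := Q₀.l_pos; positivity
  rw [dyadicIndex, Nat.floor_lt (div_nonneg (sub_nonneg.2 hx₁) hu.le), div_lt_iff₀ hu]
  push_cast
  rw [mul_div_cancel₀ _ (by positivity)]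
  linarith

theorem isDyadic_dyadicCube_dyadicIndex (hx : x ∈ Q₀.carrier) (j : ℕ) :
    IsDyadic Q₀ (dyadicCube Q₀ j (dyadicIndex Q₀ j x)) j :=
  isDyadic_iff.2 ⟨_, dyadicIndex_lt hx j, rfl⟩

theorem dyadicIndex_eq_div (h : j ≤ j') (x : Fin n → ℝ) (i : Fin n) :
    dyadicIndex Q₀ j x i = dyadicIndex Q₀ j' x i / 2 ^ (j' - j) := by
  obtain ⟨m, rfl⟩ := Nat.exists_eq_add_of_le h
  have hl := Q₀.l_pos
  rw [dyadicIndex, dyadicIndex, add_tsub_cancel_left, ← Nat.floor_div_natCast]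
  congr 1
  push_cast
  rw [pow_add]
  field_simp

theorem dyadicCube_subset (h : j ≤ j') (k : Fin n → ℕ) :
    (dyadicCube Q₀ j' k).carrier ⊆ (dyadicCube Q₀ j fun i => k i / 2 ^ (j' - j)).carrier := by
  intro x hx
  obtain ⟨ha, rfl⟩ := mem_dyadicCube_iff.1 hx
  exact mem_dyadicCube_iff.2 ⟨ha, funext (dyadicIndex_eq_div h x)⟩

namespace IsDyadic

theorem generation_unique (hQ : IsDyadic Q₀ Q j) (hQ' : IsDyadic Q₀ Q j') : j = j' := by
  have h := hQ.1.symm.trans hQ'.1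
  have hl := Q₀.l_pos
  field_simp at h
  exact Nat.pow_right_injective le_rfl (by exact_mod_cast h.symm)

theorem eq_of_mem (hQ : IsDyadic Q₀ Q j) (hQ' : IsDyadic Q₀ Q' j) (hx : x ∈ Q.carrier)
    (hx' : x ∈ Q'.carrier) : Q = Q' := by
  obtain ⟨k, -, rfl⟩ := isDyadic_iff.1 hQ
  obtain ⟨k', -, rfl⟩ := isDyadic_iff.1 hQ'
  exact congrArg _ ((mem_dyadicCube_iff.1 hx).2.symm.trans (mem_dyadicCube_iff.1 hx').2)

theorem subset_of_le (hQ : IsDyadic Q₀ Q j) (hQ' : IsDyadic Q₀ Q' j') (h : j ≤ j')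
    (hx : x ∈ Q.carrier) (hx' : x ∈ Q'.carrier) : Q'.carrier ⊆ Q.carrier := by
  obtain ⟨k, -, rfl⟩ := isDyadic_iff.1 hQ
  obtain ⟨k', -, rfl⟩ := isDyadic_iff.1 hQ'
  have hsub := dyadicCube_subset (Q₀ := Q₀) h k'
  rwa [(mem_dyadicCube_iff.1 hx).2.symm.trans (mem_dyadicCube_iff.1 (hsub hx')).2]

theorem carrier_subset (hQ : IsDyadic Q₀ Q j) : Q.carrier ⊆ Q₀.carrier := by
  obtain ⟨k, hk, rfl⟩ := isDyadic_iff.1 hQ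
  have h₀ : (fun i => k i / 2 ^ (j - 0)) = 0 := funext fun i => Nat.div_eq_of_lt (hk i)
  simpa only [h₀, dyadicCube_zero] using dyadicCube_subset (Q₀ := Q₀) (Nat.zero_le j) k

theorem exists_parent (hQ : IsDyadic Q₀ Q (j + 1)) :
    ∃ P, IsDyadic Q₀ P j ∧ Q.carrier ⊆ P.carrier := by
  obtain ⟨k, hk, rfl⟩ := isDyadic_iff.1 hQ
  refine ⟨dyadicCube Q₀ j fun i => k i / 2, isDyadic_iff.2 ⟨_, fun i => ?_, rfl⟩, ?_⟩
  · have := hk i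
    rw [pow_succ] at this
    omega
  · simpa using dyadicCube_subset (Q₀ := Q₀) (Nat.le_succ j) k

theorem l_le_of_lt {M : Cube n} {jM : ℕ} (hQ : IsDyadic Q₀ Q j) (hM : IsDyadic Q₀ M jM) {k : ℕ}
    (h : Q.l < M.l / 2 ^ k) : Q.l ≤ M.l / 2 ^ (k + 1) := by
  have hl := Q₀.l_pos
  rw [hQ.1, hM.1, div_div, ← pow_add] at h ⊢
  rw [div_lt_div_iff_of_pos_left hl (by positivity) (by positivity),
    pow_lt_pow_iff_right₀ one_lt_two] at h
  exact div_le_div_of_nonneg_left hl.le (by positivity) (pow_le_pow_right₀ one_le_two (by omega))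

end IsDyadic

end Dyadic

section DE

variable {n : ℕ} {E : Set (Fin n → ℝ)} {Q₀ : Cube n}

theorem eq_of_mem_DE_of_le {Q Q' : Cube n} (hQ : Q ∈ DE E Q₀) (hQ' : Q' ∈ DE E Q₀) {j j' : ℕ}
    (hd : IsDyadic Q₀ Q j) (hd' : IsDyadic Q₀ Q' j') (h : j ≤ j') {x : Fin n → ℝ}
    (hx : x ∈ Q.carrier) (hx' : x ∈ Q'.carrier) : Q = Q' := by
  rcases h.eq_or_lt with rfl | hlt
  · exact hd.eq_of_mem hd' hx hx'
  obtain ⟨m, rfl⟩ : ∃ m, j' = m + 1 := ⟨j' - 1, by omega⟩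
  obtain ⟨P, hP, hQ'P⟩ := hd'.exists_parent
  obtain ⟨z, hzP, hzE⟩ := hQ'.2.2 P ⟨m, hd', hP, hQ'P⟩
  have hPQ : P.carrier ⊆ Q.carrier := hd.subset_of_le hP (by omega) hx (hQ'P hx')
  exact (eq_empty_iff_forall_notMem.1 hQ.2.1 z ⟨hPQ hzP, hzE⟩).elim

theorem DE_pairwiseDisjoint : (DE E Q₀).PairwiseDisjoint Cube.carrier := by
  intro Q hQ Q' hQ' hne
  refine disjoint_left.2 fun x hx hx' => hne ?_
  obtain ⟨j, hd⟩ := hQ.1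
  obtain ⟨j', hd'⟩ := hQ'.1
  rcases le_total j j' with h | h
  · exact eq_of_mem_DE_of_le hQ hQ' hd hd' h hx hx'
  · exact (eq_of_mem_DE_of_le hQ' hQ hd' hd h hx' hx).symm

theorem DE_countable (E : Set (Fin n → ℝ)) (Q₀ : Cube n) : (DE E Q₀).Countable := by
  refine (countable_range fun p : ℕ × (Fin n → ℕ) => dyadicCube Q₀ p.1 p.2).mono ?_
  rintro Q ⟨⟨j, hd⟩, -⟩
  obtain ⟨k, -, rfl⟩ := isDyadic_iff.1 hd
  exact ⟨(j, k), rfl⟩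

theorem exists_mem_DE (hE : IsClosed E) {x : Fin n → ℝ} (hx : x ∈ Q₀.carrier) (hxE : x ∉ E) :
    ∃ Q ∈ DE E Q₀, x ∈ Q.carrier := by
  set C : ℕ → Cube n := fun j => dyadicCube Q₀ j (dyadicIndex Q₀ j x)
  have hC : ∀ j, IsDyadic Q₀ (C j) j := isDyadic_dyadicCube_dyadicIndex hx
  have hxC : ∀ j, x ∈ (C j).carrier := mem_dyadicCube_dyadicIndex hx
  have hex : ∃ j, (C j).carrier ∩ E = ∅ := by
    obtain ⟨ε, hε, hball⟩ := Metric.isOpen_iff.1 hE.isOpen_compl x hxE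
    obtain ⟨j, hj⟩ := exists_div_two_pow_lt Q₀.l hε
    refine ⟨j, eq_empty_of_forall_notMem fun y ⟨hy, hyE⟩ => hball ?_ hyE⟩
    exact ((Cube.dist_lt_l hy (hxC j)).trans_eq (hC j).1).trans hj
  refine ⟨C (Nat.find hex), ⟨⟨_, hC _⟩, Nat.find_spec hex, ?_⟩, hxC _⟩
  rintro P ⟨j, hd, hP, hsub⟩
  have hj : j + 1 = Nat.find hex := hd.generation_unique (hC _)
  rw [hP.eq_of_mem (hC j) (hsub (hxC _)) (hxC j), nonempty_iff_ne_empty]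
  exact Nat.find_min hex (by omega)

theorem biUnion_DE_carrier (hE : IsClosed E) : ⋃ Q ∈ DE E Q₀, Q.carrier = Q₀.carrier \ E := by
  ext x
  simp only [mem_iUnion, exists_prop]
  constructor
  · rintro ⟨Q, ⟨⟨j, hd⟩, hQE, -⟩, hx⟩
    exact ⟨hd.carrier_subset hx, fun hxE => eq_empty_iff_forall_notMem.1 hQE x ⟨hx, hxE⟩⟩
  · rintro ⟨hx, hxE⟩
    exact exists_mem_DE hE hx hxE

theorem tsum_DE_vol_eq_volume :
    ∑' Q : DE E Q₀, ENNReal.ofReal Q.1.vol = volume (⋃ Q ∈ DE E Q₀, Q.carrier) := by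
  rw [measure_biUnion (DE_countable E Q₀) DE_pairwiseDisjoint fun Q _ => Q.measurableSet_carrier]
  simp only [Cube.volume_carrier]

theorem tsum_DE_vol_le : ∑' Q : DE E Q₀, ENNReal.ofReal Q.1.vol ≤ ENNReal.ofReal Q₀.vol := by
  rw [tsum_DE_vol_eq_volume, ← Q₀.volume_carrier]
  exact measure_mono (iUnion₂_subset fun _ ⟨⟨_, hd⟩, _⟩ => hd.carrier_subset)

theorem tsum_DE_vol (hE : IsClosed E) (hE0 : volume E = 0) :
    ∑' Q : DE E Q₀, ENNReal.ofReal Q.1.vol = ENNReal.ofReal Q₀.vol := by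
  rw [tsum_DE_vol_eq_volume, biUnion_DE_carrier hE, measure_sdiff_null hE0, Cube.volume_carrier]

end DE

section SmallCubes

variable {n : ℕ} (E : Set (Fin n → ℝ)) (Q₀ : Cube n)

noncomputable def esumLE (L : ℝ) : ℝ≥0∞ :=
  ∑' Q : {Q : Cube n | Q ∈ DE E Q₀ ∧ Q.l ≤ L}, ENNReal.ofReal Q.1.vol

theorem sumLE_eq_toReal_esumLE (L : ℝ) : sumLE E Q₀ L = (esumLE E Q₀ L).toReal := by
  rw [esumLE, ENNReal.tsum_toReal_eq fun _ => ENNReal.ofReal_ne_top]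
  exact tsum_congr fun Q => (ENNReal.toReal_ofReal (pow_nonneg Q.1.l_pos.le n)).symm

theorem esumLE_mono : Monotone (esumLE E Q₀) := fun _ _ h =>
  ENNReal.tsum_mono_subtype (fun Q : Cube n => ENNReal.ofReal Q.vol) fun _ hQ =>
    ⟨hQ.1, hQ.2.trans h⟩

theorem esumLE_le_tsum_DE (L : ℝ) :
    esumLE E Q₀ L ≤ ∑' Q : DE E Q₀, ENNReal.ofReal Q.1.vol :=
  ENNReal.tsum_mono_subtype (fun Q : Cube n => ENNReal.ofReal Q.vol) fun _ hQ => hQ.1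

theorem esumLE_ne_top (L : ℝ) : esumLE E Q₀ L ≠ ∞ :=
  ne_top_of_le_ne_top ENNReal.ofReal_ne_top ((esumLE_le_tsum_DE E Q₀ L).trans tsum_DE_vol_le)

theorem esumLE_of_forall_le {L : ℝ} (h : ∀ Q ∈ DE E Q₀, Q.l ≤ L) :
    esumLE E Q₀ L = ∑' Q : DE E Q₀, ENNReal.ofReal Q.1.vol :=
  le_antisymm (esumLE_le_tsum_DE E Q₀ L)
    (ENNReal.tsum_mono_subtype (fun Q : Cube n => ENNReal.ofReal Q.vol) fun Q hQ => ⟨hQ, h Q hQ⟩)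

theorem exists_esumLE_div_pow_lt (c : ℝ) {τ : ℝ≥0∞} (hτ : 0 < τ) :
    ∃ k : ℕ, esumLE E Q₀ (c / 2 ^ k) < τ := by
  obtain ⟨ε, hε, hsmall⟩ := ENNReal.exists_pos_tsum_small_lt
    (ne_top_of_le_ne_top ENNReal.ofReal_ne_top tsum_DE_vol_le) (fun Q : DE E Q₀ => Q.1.l_pos) hτ
  obtain ⟨k, hk⟩ := exists_div_two_pow_lt c hε
  refine ⟨k, lt_of_le_of_lt ?_ hsmall⟩
  calc esumLE E Q₀ (c / 2 ^ k)
      = ∑' Q : {Q : DE E Q₀ // Q.1.l ≤ c / 2 ^ k}, ENNReal.ofReal Q.1.1.vol :=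
        ((Equiv.subtypeSubtypeEquivSubtypeInter (· ∈ DE E Q₀) (·.l ≤ c / 2 ^ k)).tsum_eq
          fun Q => ENNReal.ofReal Q.1.vol).symm
    _ ≤ _ := ENNReal.tsum_mono_subtype (fun Q : DE E Q₀ => ENNReal.ofReal Q.1.vol)
        fun _ hQ => lt_of_le_of_lt hQ hk

theorem esumLE_le_of_lt_div_pow {M : Cube n} (hM : M ∈ dyadicFamily Q₀) {L : ℝ} {k : ℕ}
    (h : L < M.l / 2 ^ k) : esumLE E Q₀ L ≤ esumLE E Q₀ (M.l / 2 ^ (k + 1)) := by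
  obtain ⟨_, hM⟩ := hM
  refine ENNReal.tsum_mono_subtype (fun Q : Cube n => ENNReal.ofReal Q.vol) ?_
  rintro Q ⟨hQ, hQL⟩
  obtain ⟨_, hd⟩ := hQ.1
  exact ⟨hQ, hd.l_le_of_lt hM (hQL.trans_lt h)⟩

theorem mem_Sset_iff {t L : ℝ} :
    L ∈ Sset t Q₀ E ↔ 0 ≤ L ∧ ENNReal.ofReal (t * Q₀.vol) ≤ esumLE E Q₀ L := by
  rw [Sset, mem_ofPred_eq, sumLE_eq_toReal_esumLE,
    ENNReal.ofReal_le_iff_le_toReal (esumLE_ne_top E Q₀ L)]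

end SmallCubes

theorem stmt6_general {n : ℕ} (E : Set (Fin n → ℝ)) (hE : IsClosed E)
    (hE0 : volume E = 0) (Q₀ : Cube n)
    (t : ℝ) (ht : t ∈ Set.Ioo (0 : ℝ) 1)
    (M : Cube n) (hM : M ∈ DE E Q₀) (hMmax : ∀ Q ∈ DE E Q₀, Q.l ≤ M.l) :
    ∃ Lt' : ℝ, 0 < Lt' ∧ Lt' ≤ M.l ∧ Sset t Q₀ E = Set.Ici Lt' ∧
      ∃ k₀ : ℕ, Lt' = M.l / 2 ^ k₀ := by
  obtain ⟨ht0, ht1⟩ := ht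
  have hMl := M.l_pos
  set τ := ENNReal.ofReal (t * Q₀.vol)
  have hτ : 0 < τ := ENNReal.ofReal_pos.2 (mul_pos ht0 (pow_pos Q₀.l_pos n))
  have hstart : τ ≤ esumLE E Q₀ (M.l / 2 ^ 0) := by
    rw [pow_zero, div_one, esumLE_of_forall_le E Q₀ hMmax, tsum_DE_vol hE hE0]
    exact ENNReal.ofReal_le_ofReal (mul_le_of_le_one_left (pow_pos Q₀.l_pos n).le ht1.le)
  obtain ⟨k₀, hk₀, hk₀'⟩ : ∃ k, τ ≤ esumLE E Q₀ (M.l / 2 ^ k) ∧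
      esumLE E Q₀ (M.l / 2 ^ (k + 1)) < τ := by
    by_contra! h
    obtain ⟨k, hk⟩ := exists_esumLE_div_pow_lt E Q₀ M.l hτ
    exact hk.not_ge (Nat.rec hstart h k)
  have hpos : 0 < M.l / 2 ^ k₀ := by positivity
  refine ⟨M.l / 2 ^ k₀, hpos, div_le_self hMl.le (one_le_pow₀ one_le_two), ?_, k₀, rfl⟩
  ext L
  rw [mem_Sset_iff, mem_Ici]
  refine ⟨fun ⟨_, hL⟩ => ?_, fun hL => ⟨hpos.le.trans hL, hk₀.trans (esumLE_mono E Q₀ hL)⟩⟩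
  by_contra! hlt
  exact hk₀'.not_ge (hL.trans (esumLE_le_of_lt_div_pow E Q₀ hM.1 hlt))

/-- For `t ∈ (0,1)`, the set `𝓢(t,Q₀,E)` is a half-closed interval `[L'_t, ∞)` with
`0 < L'_t ≤ l(𝓜(Q₀))`, and `L'_t = 2^{-k₀} l(𝓜(Q₀))` for some `k₀ ≥ 0`. -/
theorem stmt6 {n : ℕ} (E : Set (Fin n → ℝ)) (hE : IsClosed E) (hne : E.Nonempty)
    (hE0 : volume E = 0) (Q₀ : Cube n) (hQ₀ : (Q₀.carrier ∩ E).Nonempty)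
    (t : ℝ) (ht : t ∈ Set.Ioo (0 : ℝ) 1)
    (M : Cube n) (hM : M ∈ DE E Q₀) (hMmax : ∀ Q ∈ DE E Q₀, Q.l ≤ M.l) :
    ∃ Lt' : ℝ, 0 < Lt' ∧ Lt' ≤ M.l ∧ Sset t Q₀ E = Set.Ici Lt' ∧
      ∃ k₀ : ℕ, Lt' = M.l / 2 ^ k₀ :=
  stmt6_general E hE hE0 Q₀ t ht M hM hMmax
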